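/- arXiv:0801.2445 — 2 statements merged into one kernel-verified Lean document; each statement's English description precedes it below -/
import Mathlib

section
/- Let N ≥ 5 be an integer and b ≥ −4 a real number, and define u(x) = −4 log|x| − (4+b)(1−|x|²)/2 for x ∈ B \ {0}. Then u is a singular subsolution: Δ²u(x) = 8(N−2)(N−4)|x|^{−4} ≤ 8(N−2)(N−4) e^{(4+b)/2} e^{u(x)} for all x ∈ B \ {0}, and on the boundary sphere u(x) = 0 and ∂u/∂n(x) = ∇u(x)·x = b for all |x| = 1. -/
/-!
For a radial function one has `Δ (φ (|x|²)) = 2N φ'(|x|²) + 4|x|² φ''(|x|²)`.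
Since `u = φ (|x|²)` with `φ t = -2 log t - (4+b)(1-t)/2`, this gives
`Δu = (8 - 4N)/|x|² + N(4+b)` away from the origin, and applying the formula once more,
to `c/|x|² + d`, gives `Δ²u = 2(8 - 4N)(4 - N)/|x|⁴ = 8(N-2)(N-4)/|x|⁴`.
The inequality is `e^{(4+b)/2} eᵘ = |x|⁻⁴ e^{(4+b)|x|²/2} ≥ |x|⁻⁴`, because `4 + b ≥ 0`.
-/

open MeasureTheory Metric

/-- The Laplacian of `u : ℝ^N → ℝ`: the sum of its second partial derivatives. -/
noncomputable def lap {N : ℕ} (u : EuclideanSpace ℝ (Fin N) → ℝ) :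
    EuclideanSpace ℝ (Fin N) → ℝ :=
  fun x => ∑ i, fderiv ℝ (fun y => fderiv ℝ u y (EuclideanSpace.single i 1)) x
    (EuclideanSpace.single i 1)

/-- The bilaplacian `Δ²u = Δ(Δu)`. -/
noncomputable def bilap {N : ℕ} (u : EuclideanSpace ℝ (Fin N) → ℝ) :
    EuclideanSpace ℝ (Fin N) → ℝ :=
  lap (lap u)

open Filter Topology

theorem hasFDerivAt_comp_norm_sq {F : Type*} [NormedAddCommGroup F] [InnerProductSpace ℝ F]
    {φ : ℝ → ℝ} {φ' : ℝ} {x : F} (hφ : HasDerivAt φ φ' (‖x‖ ^ 2)) :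
    HasFDerivAt (fun y => φ (‖y‖ ^ 2)) ((2 * φ') • innerSL ℝ x) x := by
  refine (hφ.comp_hasFDerivAt x (hasStrictFDerivAt_norm_sq x).hasFDerivAt).congr_fderiv ?_
  ext v
  simp
  ring

section Euclidean

variable {N : ℕ}

theorem fderiv_comp_norm_sq_single {φ : ℝ → ℝ} {φ' : ℝ} {x : EuclideanSpace ℝ (Fin N)}
    (hφ : HasDerivAt φ φ' (‖x‖ ^ 2)) (i : Fin N) :
    fderiv ℝ (fun y => φ (‖y‖ ^ 2)) x (EuclideanSpace.single i 1) = 2 * φ' * x i := by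
  simp [(hasFDerivAt_comp_norm_sq hφ).fderiv, EuclideanSpace.inner_single_right]

theorem Filter.EventuallyEq.lap_eq {u v : EuclideanSpace ℝ (Fin N) → ℝ}
    {x : EuclideanSpace ℝ (Fin N)} (h : u =ᶠ[𝓝 x] v) : lap u x = lap v x := by
  have hD : fderiv ℝ u =ᶠ[𝓝 x] fderiv ℝ v := by
    filter_upwards [h.eventuallyEq_nhds] with y hy using hy.fderiv_eq
  refine Finset.sum_congr rfl fun i _ => ?_
  congr 1
  exact (hD.fun_comp fun L => L (EuclideanSpace.single i 1)).fderiv_eq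

theorem lap_comp_norm_sq {φ φ' : ℝ → ℝ} {φ'' : ℝ} {x : EuclideanSpace ℝ (Fin N)}
    (hφ : ∀ᶠ t in 𝓝 (‖x‖ ^ 2), HasDerivAt φ (φ' t) t) (hφ' : HasDerivAt φ' φ'' (‖x‖ ^ 2)) :
    lap (fun y => φ (‖y‖ ^ 2)) x = 2 * N * φ' (‖x‖ ^ 2) + 4 * ‖x‖ ^ 2 * φ'' := by
  have hnear : ∀ᶠ y in 𝓝 x, HasDerivAt φ (φ' (‖y‖ ^ 2)) (‖y‖ ^ 2) :=
    ((continuous_norm.pow 2).tendsto x).eventually hφ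
  have hterm : ∀ i : Fin N,
      fderiv ℝ (fun y => fderiv ℝ (fun y => φ (‖y‖ ^ 2)) y (EuclideanSpace.single i 1)) x
        (EuclideanSpace.single i 1) = 4 * φ'' * x i ^ 2 + 2 * φ' (‖x‖ ^ 2) := by
    intro i
    have hev : (fun y => fderiv ℝ (fun y => φ (‖y‖ ^ 2)) y (EuclideanSpace.single i 1))
        =ᶠ[𝓝 x] fun y => 2 * φ' (‖y‖ ^ 2) * y i := by
      filter_upwards [hnear] with y hy using fderiv_comp_norm_sq_single hy i
    rw [hev.fderiv_eq]
    have hd : HasFDerivAt (fun y => 2 * φ' (‖y‖ ^ 2) * y i) _ x :=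
      ((hasFDerivAt_comp_norm_sq hφ').const_mul 2).fun_mul (PiLp.hasFDerivAt_apply 2 x i)
    rw [hd.fderiv]
    simp [EuclideanSpace.inner_single_right]
    ring
  simp only [lap, hterm, Finset.sum_add_distrib, ← Finset.mul_sum,
    ← EuclideanSpace.real_norm_sq_eq, Finset.sum_const, Finset.card_univ, Fintype.card_fin,
    nsmul_eq_mul]
  ring

theorem lap_div_norm_sq_add_const (c d : ℝ) {x : EuclideanSpace ℝ (Fin N)} (hx : x ≠ 0) :
    lap (fun y => c / ‖y‖ ^ 2 + d) x = 2 * c * (4 - N) / ‖x‖ ^ 4 := by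
  have hs : ‖x‖ ^ 2 ≠ 0 := by positivity
  have hφ : ∀ᶠ t in 𝓝 (‖x‖ ^ 2), HasDerivAt (fun t => c / t + d) (-c / t ^ 2) t := by
    filter_upwards [eventually_ne_nhds hs] with t ht
    simpa [div_eq_mul_inv] using ((hasDerivAt_inv ht).const_mul c).add_const d
  have hφ' : HasDerivAt (fun t => -c / t ^ 2) (2 * c / (‖x‖ ^ 2) ^ 3) (‖x‖ ^ 2) := by
    have h := ((hasDerivAt_pow 2 (‖x‖ ^ 2)).inv (pow_ne_zero 2 hs)).const_mul (-c)
    simp only [Pi.inv_apply, ← div_eq_mul_inv] at h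
    refine h.congr_deriv ?_
    field_simp
    ring
  rw [lap_comp_norm_sq (φ := fun t => c / t + d) hφ hφ']
  field_simp
  ring

end Euclidean

noncomputable def subsolution (N : ℕ) (b : ℝ) : EuclideanSpace ℝ (Fin N) → ℝ :=
  fun x => -4 * Real.log ‖x‖ - (4 + b) * (1 - ‖x‖ ^ 2) / 2

namespace subsolution

variable {N : ℕ} {b : ℝ} {x : EuclideanSpace ℝ (Fin N)}

theorem eq_comp_norm_sq (N : ℕ) (b : ℝ) :
    subsolution N b = fun x => -2 * Real.log (‖x‖ ^ 2) - (4 + b) * (1 - ‖x‖ ^ 2) / 2 := by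
  funext x
  simp only [subsolution, Real.log_pow]
  push_cast
  ring

theorem hasDerivAt_profile (b : ℝ) {t : ℝ} (ht : t ≠ 0) :
    HasDerivAt (fun t => -2 * Real.log t - (4 + b) * (1 - t) / 2) (-2 / t + (4 + b) / 2) t := by
  have h := ((Real.hasDerivAt_log ht).const_mul (-2)).sub
    (((hasDerivAt_id t).const_sub 1).const_mul (4 + b) |>.div_const 2)
  refine h.congr_deriv ?_
  simp only [div_eq_mul_inv]
  ring

theorem hasDerivAt_profile_deriv (b : ℝ) {t : ℝ} (ht : t ≠ 0) :
    HasDerivAt (fun t => -2 / t + (4 + b) / 2) (2 / t ^ 2) t := by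
  simpa [div_eq_mul_inv] using ((hasDerivAt_inv ht).const_mul (-2)).add_const ((4 + b) / 2)

theorem lap_eq (hx : x ≠ 0) :
    lap (subsolution N b) x = (8 - 4 * N) / ‖x‖ ^ 2 + N * (4 + b) := by
  have hs : ‖x‖ ^ 2 ≠ 0 := by positivity
  rw [eq_comp_norm_sq, lap_comp_norm_sq ((eventually_ne_nhds hs).mono fun _ => hasDerivAt_profile b)
    (hasDerivAt_profile_deriv b hs)]
  field_simp
  ring

theorem bilap_eq (hx : x ≠ 0) :
    bilap (subsolution N b) x = 8 * ((N : ℝ) - 2) * ((N : ℝ) - 4) / ‖x‖ ^ 4 := by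
  have hlap : lap (subsolution N b) =ᶠ[𝓝 x] fun y => (8 - 4 * N) / ‖y‖ ^ 2 + N * (4 + b) := by
    filter_upwards [eventually_ne_nhds hx] with y hy using lap_eq hy
  rw [bilap, hlap.lap_eq, lap_div_norm_sq_add_const _ _ hx]
  ring

theorem fderiv_self (hx : x ≠ 0) : fderiv ℝ (subsolution N b) x x = (4 + b) * ‖x‖ ^ 2 - 4 := by
  have hs : ‖x‖ ^ 2 ≠ 0 := by positivity
  rw [eq_comp_norm_sq, (hasFDerivAt_comp_norm_sq (hasDerivAt_profile b hs)).fderiv]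
  simp only [smul_apply, innerSL_apply_apply, real_inner_self_eq_norm_sq, smul_eq_mul]
  field_simp
  ring

theorem inv_norm_pow_four_le_exp (hb : -4 ≤ b) (hx : x ≠ 0) :
    (‖x‖ ^ 4)⁻¹ ≤ Real.exp ((4 + b) / 2) * Real.exp (subsolution N b x) := by
  have hr : 0 < ‖x‖ := norm_pos_iff.mpr hx
  have hexp : Real.exp ((4 + b) / 2) * Real.exp (subsolution N b x) * ‖x‖ ^ 4
      = Real.exp ((4 + b) * ‖x‖ ^ 2 / 2) := by
    rw [← Real.exp_log (pow_pos hr 4), Real.log_pow, ← Real.exp_add, ← Real.exp_add, subsolution]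
    congr 1
    push_cast
    ring
  rw [inv_le_iff_one_le_mul₀ (pow_pos hr 4), hexp]
  have hb' : 0 ≤ 4 + b := by linarith
  exact Real.one_le_exp (by positivity)

end subsolution

/-- The explicit singular subsolution `u(x) = -4 log|x| - (4+b)(1-|x|²)/2` used in the
proofs of Lemma 5.2 and Proposition 1.5 b): it satisfies
`Δ²u = 8(N-2)(N-4)|x|⁻⁴ ≤ 8(N-2)(N-4) e^{(4+b)/2} eᵘ` in `B \ {0}`, with `u = 0` and
`∂u/∂n = b` on `∂B`. -/
theorem explicit_subsolution (N : ℕ) (hN : 5 ≤ N) (b : ℝ) (hb : -4 ≤ b) :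
    let u : EuclideanSpace ℝ (Fin N) → ℝ :=
      fun x => -4 * Real.log ‖x‖ - (4 + b) * (1 - ‖x‖ ^ 2) / 2
    (∀ x : EuclideanSpace ℝ (Fin N), ‖x‖ < 1 → x ≠ 0 →
      bilap u x = 8 * ((N : ℝ) - 2) * ((N : ℝ) - 4) / ‖x‖ ^ 4 ∧
      8 * ((N : ℝ) - 2) * ((N : ℝ) - 4) / ‖x‖ ^ 4 ≤
        8 * ((N : ℝ) - 2) * ((N : ℝ) - 4) * Real.exp ((4 + b) / 2) * Real.exp (u x)) ∧
    (∀ x : EuclideanSpace ℝ (Fin N), ‖x‖ = 1 → u x = 0 ∧ fderiv ℝ u x x = b) := by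
  intro u
  have hu : u = subsolution N b := rfl
  rw [hu]
  have hA : 0 ≤ 8 * ((N : ℝ) - 2) * ((N : ℝ) - 4) := by
    have : (5 : ℝ) ≤ N := by exact_mod_cast hN
    nlinarith
  refine ⟨fun x _ hx => ⟨subsolution.bilap_eq hx, ?_⟩, fun x hx => ⟨?_, ?_⟩⟩
  · rw [div_eq_mul_inv, mul_assoc _ (Real.exp _)]
    exact mul_le_mul_of_nonneg_left (subsolution.inv_norm_pow_four_le_exp hb hx) hA
  · simp [subsolution, hx]
  · rw [subsolution.fderiv_self (norm_ne_zero_iff.mp (hx ▸ one_ne_zero)), hx]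
    ring
end

section
/- For all real numbers x and y, (e^x + e^y)/2 ≥ e^{(x+y)/2} + (1/8)(x − y)² e^{(x+y)/2}. -/
/-!
With `m = (x + y) / 2` and `t = (x - y) / 2`, the right side is `eᵐ cosh t` and the left side is
`eᵐ (1 + t² / 2)`, the first two terms of the power series of `cosh t`, all of whose terms are
nonnegative.
-/

open Real Finset
open scoped Nat

namespace Real

theorem one_add_sq_div_two_le_cosh (t : ℝ) : 1 + t ^ 2 / 2 ≤ cosh t := by
  have partial_sum : ∑ n ∈ range 2, t ^ (2 * n) / ((2 * n)! : ℝ) = 1 + t ^ 2 / 2 := by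
    norm_num [sum_range_succ]
  rw [← partial_sum]
  refine sum_le_hasSum _ (fun n _ => ?_) (hasSum_cosh t)
  rw [pow_mul]
  positivity

theorem exp_add_exp_div_two (x y : ℝ) :
    (exp x + exp y) / 2 = exp ((x + y) / 2) * cosh ((x - y) / 2) := by
  rw [cosh_eq, mul_div_assoc', mul_add, ← exp_add, ← exp_add]
  ring_nf

end Real

/-- The convexity inequality (19): for all real `x`, `y`,
`(eˣ + eʸ)/2 ≥ e^{(x+y)/2} + (1/8)(x-y)² e^{(x+y)/2}`. -/
theorem exp_midpoint_inequality (x y : ℝ) :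
    Real.exp ((x + y) / 2) + 1 / 8 * (x - y) ^ 2 * Real.exp ((x + y) / 2) ≤
      (Real.exp x + Real.exp y) / 2 := by
  calc Real.exp ((x + y) / 2) + 1 / 8 * (x - y) ^ 2 * Real.exp ((x + y) / 2)
      = Real.exp ((x + y) / 2) * (1 + ((x - y) / 2) ^ 2 / 2) := by ring
    _ ≤ Real.exp ((x + y) / 2) * cosh ((x - y) / 2) :=
        mul_le_mul_of_nonneg_left (one_add_sq_div_two_le_cosh _) (exp_pos _).le
    _ = (Real.exp x + Real.exp y) / 2 := (exp_add_exp_div_two x y).symm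
end
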